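/- Let K be a cap body in E^3 with vertices {x_i}_{i=1}^m, and suppose the unit vectors v_1, …, v_k satisfy: (i) for each i = 1, …, m there is some j with v_j ∈ C(−x̂_i, π/2 − φ_i), where x̂_i = x_i/‖x_i‖ and φ_i = arccos(1/‖x_i‖); and (ii) the positive hull of {v_1, …, v_k} is all of E^3. Then the directions v_1, …, v_k illuminate K. -/

import Mathlib

/-!
A boundary point `p` of `K` lies on a segment `[xᵢ, b]` with `b` in the unit ball. If `p` is
itself in the unit ball, some `vⱼ` has `⟪vⱼ, p⟫ < 0` because the `vⱼ` positively span `E³`, and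
`p - ⟪p, vⱼ⟫ vⱼ` lies in the open ball (for `p = 0` any short step does). Otherwise `p ≠ b`. Since
`cos (π/2 - φᵢ) = sin φᵢ = √(1 - 1/‖xᵢ‖²)`, the cap condition on `vⱼ` reads
`√(‖xᵢ‖² - 1) < -⟪xᵢ, vⱼ⟫`, i.e. the ray from `xᵢ` along `vⱼ` reaches the point
`xᵢ - ⟪xᵢ, vⱼ⟫ vⱼ` of the open ball. Translating `[xᵢ, b]` along `vⱼ` then moves `p` onto a
segment from this interior point to `b ∈ K`, hence into the interior of the convex body `K`.
-/

open Metric Real Set RealInnerProductSpace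

/-- The open spherical cap `C(ξ, ψ)` on the unit sphere `S² ⊂ E³` with center `ξ`
and radius `ψ`. -/
def openCap (ξ : EuclideanSpace ℝ (Fin 3)) (ψ : ℝ) : Set (EuclideanSpace ℝ (Fin 3)) :=
  {y ∈ sphere (0 : EuclideanSpace ℝ (Fin 3)) 1 | Real.cos ψ < ⟪ξ, y⟫}

theorem IsCompact.convexJoin {E : Type*} [AddCommGroup E] [Module ℝ E] [TopologicalSpace E]
    [IsTopologicalAddGroup E] [ContinuousSMul ℝ E] {s t : Set E}
    (hs : IsCompact s) (ht : IsCompact t) : IsCompact (_root_.convexJoin ℝ s t) := by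
  have : _root_.convexJoin ℝ s t =
      (fun q : E × E × ℝ => (1 - q.2.2) • q.1 + q.2.2 • q.2.1) '' (s ×ˢ t ×ˢ Icc 0 1) := by
    ext p
    simp only [mem_convexJoin, segment_eq_image, mem_image, mem_prod, Prod.exists]
    aesop
  rw [this]
  exact (hs.prod (ht.prod isCompact_Icc)).image (by fun_prop)

section InnerProductSpace

variable {E : Type*} [NormedAddCommGroup E] [InnerProductSpace ℝ E]

theorem convexHull_insert_closedBall (x : E) :
    convexHull ℝ (insert x (closedBall 0 1)) = convexJoin ℝ {x} (closedBall (0 : E) 1) := by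
  rw [convexHull_insert ⟨0, by simp⟩, (convex_closedBall _ _).convexHull_eq]

theorem norm_sub_inner_smul_sq {v : E} (hv : ‖v‖ = 1) (x : E) :
    ‖x - ⟪x, v⟫ • v‖ ^ 2 = ‖x‖ ^ 2 - ⟪x, v⟫ ^ 2 := by
  rw [norm_sub_sq_real, real_inner_smul_right, norm_smul, hv, mul_one, Real.norm_eq_abs, sq_abs]
  ring

theorem sub_inner_smul_mem_ball {v x : E} (hv : ‖v‖ = 1) (hx : ‖x‖ ^ 2 < 1 + ⟪x, v⟫ ^ 2) :
    x - ⟪x, v⟫ • v ∈ ball 0 1 := by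
  rw [mem_ball_zero_iff, ← sq_lt_one_iff₀ (norm_nonneg _), norm_sub_inner_smul_sq hv]
  linarith

theorem exists_inner_neg_of_forall_eq_pos_combination {ι : Type*} [Fintype ι] {v : ι → E}
    (hpos : ∀ y : E, ∃ c : ι → ℝ, (∀ j, 0 < c j) ∧ y = ∑ j, c j • v j)
    {p : E} (hp : p ≠ 0) : ∃ j, ⟪v j, p⟫ < 0 := by
  obtain ⟨c, hc, hsum⟩ := hpos (-p)
  by_contra! hall
  have : 0 ≤ ⟪-p, p⟫ := by
    rw [hsum, sum_inner]
    exact Finset.sum_nonneg fun j _ => by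
      rw [real_inner_smul_left]; exact mul_nonneg (hc j).le (hall j)
  rw [inner_neg_left, real_inner_self_eq_norm_sq] at this
  have : 0 < ‖p‖ ^ 2 := by positivity
  linarith

theorem exists_add_smul_mem_ball_of_forall_eq_pos_combination [Nontrivial E]
    {ι : Type*} [Fintype ι] {v : ι → E} (hv : ∀ j, ‖v j‖ = 1)
    (hpos : ∀ y : E, ∃ c : ι → ℝ, (∀ j, 0 < c j) ∧ y = ∑ j, c j • v j)
    {p : E} (hp : p ∈ closedBall 0 1) : ∃ j, ∃ t : ℝ, 0 < t ∧ p + t • v j ∈ ball 0 1 := by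
  rcases eq_or_ne p 0 with rfl | hp0
  · obtain ⟨y, hy⟩ := exists_ne (0 : E)
    obtain ⟨j, -⟩ := exists_inner_neg_of_forall_eq_pos_combination hpos hy
    refine ⟨j, 1 / 2, by norm_num, ?_⟩
    rw [mem_ball_zero_iff, zero_add, norm_smul, hv]
    norm_num
  · obtain ⟨j, hj⟩ := exists_inner_neg_of_forall_eq_pos_combination hpos hp0
    rw [real_inner_comm] at hj
    refine ⟨j, -⟪p, v j⟫, neg_pos.2 hj, ?_⟩
    rw [neg_smul, ← sub_eq_add_neg]
    refine sub_inner_smul_mem_ball (hv j) ?_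
    have : ‖p‖ ^ 2 ≤ 1 := pow_le_one₀ (norm_nonneg p) (mem_closedBall_zero_iff.1 hp)
    nlinarith [sq_pos_of_neg hj]

theorem exists_add_smul_mem_interior_of_mem_segment {K : Set E} (hK : Convex ℝ K)
    (hB : closedBall 0 1 ⊆ K) {x v b p : E} (hv : ‖v‖ = 1) (hxv : ⟪x, v⟫ < 0)
    (hx : ‖x‖ ^ 2 < 1 + ⟪x, v⟫ ^ 2) (hb : b ∈ closedBall 0 1) (hp : p ∈ segment ℝ x b)
    (hpb : p ≠ b) : ∃ t : ℝ, 0 < t ∧ p + t • v ∈ interior K := by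
  obtain ⟨a, c, ha0, hc, hac, rfl⟩ := hp
  have ha : 0 < a := by
    refine ha0.lt_of_ne fun ha => hpb ?_
    obtain rfl : c = 1 := by linarith
    simp [← ha]
  have hball : ball 0 1 ⊆ interior K :=
    ball_subset_interior_closedBall.trans (interior_mono hB)
  refine ⟨-(a * ⟪x, v⟫), by nlinarith, ?_⟩
  have : a • x + c • b + -(a * ⟪x, v⟫) • v = a • (x - ⟪x, v⟫ • v) + c • b := by module
  rw [this]
  exact hK.combo_interior_self_mem_interior (hball (sub_inner_smul_mem_ball hv hx)) (hB hb)
    ha hc hac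

end InnerProductSpace

theorem inner_neg_and_norm_sq_lt_of_mem_openCap {x v : EuclideanSpace ℝ (Fin 3)} (hx : 1 < ‖x‖)
    (hv : v ∈ openCap (-(‖x‖⁻¹ • x)) (π / 2 - arccos (1 / ‖x‖))) :
    ⟪x, v⟫ < 0 ∧ ‖x‖ ^ 2 < 1 + ⟪x, v⟫ ^ 2 := by
  have hR : 0 < ‖x‖ := by linarith
  have h := hv.2
  rw [cos_pi_div_two_sub, sin_arccos, inner_neg_left, real_inner_smul_left] at h
  have hs : 0 < -(‖x‖⁻¹ * ⟪x, v⟫) := (sqrt_nonneg _).trans_lt h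
  rw [sqrt_lt' hs] at h
  refine ⟨?_, ?_⟩
  · nlinarith [inv_pos.2 hR]
  · field_simp at h
    nlinarith

/-- Illumination criterion for cap bodies: if `K` is a cap body with vertices
`x₁, …, x_m` and the unit vectors `v₁, …, v_k` satisfy
(i) for each `i` some `vⱼ` lies in the open cap `C(−x̂ᵢ, π/2 − φᵢ)`, and
(ii) the positive hull of `{v₁, …, v_k}` is all of `E³`,
then the directions `v₁, …, v_k` illuminate `K`: every boundary point of `K` can be
moved into the interior of `K` along some `vⱼ`. -/
theorem cap_body_illumination_criterion
    (K : Set (EuclideanSpace ℝ (Fin 3)))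
    (m : ℕ) (hm : 0 < m) (x : Fin m → EuclideanSpace ℝ (Fin 3))
    (hx : ∀ i, 1 < ‖x i‖)
    (hK : K = ⋃ i, convexHull ℝ ({x i} ∪ closedBall 0 1))
    (hconv : Convex ℝ K)
    (k : ℕ) (v : Fin k → EuclideanSpace ℝ (Fin 3))
    (hv : ∀ j, ‖v j‖ = 1)
    (hcap : ∀ i, ∃ j, v j ∈
      openCap (-(‖x i‖⁻¹ • x i)) (Real.pi / 2 - Real.arccos (1 / ‖x i‖)))
    (hpos : ∀ y : EuclideanSpace ℝ (Fin 3),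
      ∃ c : Fin k → ℝ, (∀ j, 0 < c j) ∧ y = ∑ j, c j • v j) :
    ∀ p ∈ frontier K, ∃ j, ∃ t : ℝ, 0 < t ∧ p + t • v j ∈ interior K := by
  simp only [singleton_union, convexHull_insert_closedBall] at hK
  have hB : closedBall 0 1 ⊆ K := fun b hb =>
    hK ▸ mem_iUnion.2 ⟨⟨0, hm⟩, subset_convexJoin_right (singleton_nonempty _) hb⟩
  have hclosed : IsClosed K := hK ▸ isClosed_iUnion_of_finite fun i =>
    (isCompact_singleton.convexJoin (isCompact_closedBall 0 1)).isClosed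
  intro p hp
  by_cases hp1 : p ∈ closedBall 0 1
  · obtain ⟨j, t, ht, hpt⟩ := exists_add_smul_mem_ball_of_forall_eq_pos_combination hv hpos hp1
    exact ⟨j, t, ht, ball_subset_interior_closedBall.trans (interior_mono hB) hpt⟩
  obtain ⟨i, hpi⟩ := mem_iUnion.1 (hK ▸ hclosed.frontier_subset hp)
  obtain ⟨_, rfl, b, hb, hpb⟩ := mem_convexJoin.1 hpi
  obtain ⟨j, hj⟩ := hcap i
  obtain ⟨hxv, hxv'⟩ := inner_neg_and_norm_sq_lt_of_mem_openCap (hx i) hj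
  exact ⟨j, exists_add_smul_mem_interior_of_mem_segment hconv hB (hv j) hxv hxv' hb hpb
    (ne_of_mem_of_not_mem hb hp1).symm⟩
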